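/- Let P be a finite set of points in the plane in general position, consisting of b blue points and r red points. Then there exists a set of at most (2/3)r + 5/3 pairwise disjoint closed triangles such that every blue point lies in the interior of some triangle and no triangle contains a red point. -/

import Mathlib

abbrev Pt := ℝ × ℝ

def GenPos (P : Finset Pt) : Prop :=
  ∀ p ∈ P, ∀ q ∈ P, ∀ r ∈ P, p ≠ q → p ≠ r → q ≠ r → ¬ Collinear ℝ ({p, q, r} : Set Pt)

/-!
Shear the plane so that all points get distinct x-coordinates, and sweep from left to right.
The two leftmost red points `q₁, q₂` span a line, and the blue points left of the third red point
`q₃` lie in a vertical slab, on either side of that line. One triangle per side covers them while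
staying inside the slab and off the line, hence away from all red points. Recursing right of `q₃`,
every three red points cost two triangles; at most two remaining red points lie on one line and
cost two more, and one triangle suffices when no red point is left. This gives
`3 |T| ≤ 2 r + 5`.
-/

open Set Filter Topology

section Generic

theorem Collinear.image_affineMap {k V₁ V₂ P₁ P₂ : Type*} [DivisionRing k] [AddCommGroup V₁]
    [Module k V₁] [AddTorsor V₁ P₁] [AddCommGroup V₂] [Module k V₂] [AddTorsor V₂ P₂]
    {s : Set P₁} (h : Collinear k s) (f : P₁ →ᵃ[k] P₂) : Collinear k (f '' s) := by
  rw [collinear_iff_exists_forall_eq_smul_vadd] at h ⊢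
  obtain ⟨p₀, v, hv⟩ := h
  refine ⟨f p₀, f.linear v, ?_⟩
  rintro _ ⟨p, hp, rfl⟩
  obtain ⟨r, rfl⟩ := hv p hp
  exact ⟨r, by rw [f.map_vadd, f.linear.map_smul]⟩

variable {k E F : Type*} [DivisionRing k] [AddCommGroup E] [Module k E] [AddCommGroup F]
  [Module k F]

theorem LinearEquiv.collinear_image_iff (e : E ≃ₗ[k] F) {s : Set E} :
    Collinear k (e '' s) ↔ Collinear k s :=
  ⟨fun h => by simpa [image_image] using h.image_affineMap e.symm.toLinearMap.toAffineMap,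
    fun h => h.image_affineMap e.toLinearMap.toAffineMap⟩

theorem LinearEquiv.image_convexHull [Module ℝ E] [Module ℝ F] (e : E ≃ₗ[ℝ] F) (s : Set E) :
    e '' convexHull ℝ s = convexHull ℝ (e '' s) :=
  e.toLinearMap.image_convexHull s

theorem LinearEquiv.image_interior_convexHull {V W : Type*} [NormedAddCommGroup V]
    [NormedSpace ℝ V] [FiniteDimensional ℝ V] [NormedAddCommGroup W] [NormedSpace ℝ W]
    (e : V ≃ₗ[ℝ] W) (s : Set V) :
    e '' interior (convexHull ℝ s) = interior (convexHull ℝ (e '' s)) := by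
  rw [← e.image_convexHull]
  exact e.toContinuousLinearEquiv.toHomeomorph.image_interior _

theorem subset_interior_convexHull_triple [Module ℝ E] [TopologicalSpace E] {A B C : E}
    {u v w : E → ℝ} (hu : Continuous u) (hv : Continuous v) (hw : Continuous w)
    (hsum : ∀ p, u p + v p + w p = 1) (hcomb : ∀ p, u p • A + v p • B + w p • C = p) :
    {p | 0 < u p ∧ 0 < v p ∧ 0 < w p} ⊆ interior (convexHull ℝ {A, B, C}) := by
  refine interior_maximal (fun p ⟨hup, hvp, hwp⟩ => ?_)
    ((isOpen_lt continuous_const hu).inter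
      ((isOpen_lt continuous_const hv).inter (isOpen_lt continuous_const hw)))
  have := (convex_convexHull ℝ {A, B, C}).sum_mem (t := Finset.univ) (w := ![u p, v p, w p])
    (z := ![A, B, C]) (by simp [Fin.forall_fin_succ, hup.le, hvp.le, hwp.le])
    (by simp [Fin.sum_univ_three, hsum]) (by simp [Fin.forall_fin_succ, subset_convexHull ℝ _ _])
  simpa [Fin.sum_univ_three, hcomb] using this

theorem Finset.exists_pos_forall_lt {α : Type*} {S : Finset α} {f : α → ℝ}
    (hf : ∀ z ∈ S, 0 < f z) : ∃ ε > 0, ∀ z ∈ S, ε < f z :=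
  (((Finset.eventually_all S).2 fun z hz =>
    nhdsWithin_le_nhds (eventually_lt_nhds (hf z hz))).and
      (self_mem_nhdsWithin : Set.Ioi (0 : ℝ) ∈ 𝓝[>] 0)).exists.imp
    fun _ h => ⟨h.2, h.1⟩

theorem Finset.exists_pos_gap {α : Type*} (S : Finset α) (f : α → ℝ) (t : ℝ) :
    ∃ δ > 0, ∀ x ∈ S, (f x < t → f x < t - δ) ∧ (t < f x → t + δ < f x) := by
  classical
  obtain ⟨δ, hδ, hδS⟩ := (S.filter (f · ≠ t)).exists_pos_forall_lt (f := fun x => |f x - t|)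
    fun x hx => abs_pos.2 (sub_ne_zero.2 (Finset.mem_filter.1 hx).2)
  refine ⟨δ, hδ, fun x hx => ⟨fun hlt => ?_, fun hgt => ?_⟩⟩
  · have := hδS x (Finset.mem_filter.2 ⟨hx, hlt.ne⟩)
    rw [abs_of_neg (sub_neg.2 hlt)] at this
    linarith
  · have := hδS x (Finset.mem_filter.2 ⟨hx, hgt.ne'⟩)
    rw [abs_of_pos (sub_pos.2 hgt)] at this
    linarith

theorem Finset.exists_forall_lt {α : Type*} (S : Finset α) (f : α → ℝ) :
    ∃ c, ∀ z ∈ S, c < f z :=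
  ((Finset.eventually_all S).2 fun z _ => eventually_lt_atBot (f z)).exists

theorem Finset.exists_forall_gt {α : Type*} (S : Finset α) (f : α → ℝ) :
    ∃ c > 0, ∀ z ∈ S, f z < c :=
  (((Finset.eventually_all S).2 fun z _ => eventually_gt_atTop (f z)).and
    (eventually_gt_atTop 0)).exists.imp fun _ h => ⟨h.2, h.1⟩

variable {α β : Type*} [LinearOrder β]

theorem Finset.exists_card_filter_lt_eq (s : Finset α) {f : α → β} (hf : InjOn f s) {k : ℕ}
    (hk : k < s.card) : ∃ x ∈ s, (s.filter fun y => f y < f x).card = k := by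
  classical
  induction k generalizing s with
  | zero =>
    obtain ⟨x, hx, hmin⟩ := s.exists_min_image f (Finset.card_pos.1 hk)
    exact ⟨x, hx, by simpa [Finset.filter_eq_empty_iff] using hmin⟩
  | succ k ih =>
    obtain ⟨x₀, hx₀, hmin⟩ := s.exists_min_image f (Finset.card_pos.1 (by omega))
    obtain ⟨x, hx, hcard⟩ := ih (s.erase x₀) (hf.mono (Finset.erase_subset x₀ s))
      (by rw [Finset.card_erase_of_mem hx₀]; omega)
    have hx₀x : f x₀ < f x := (hmin x (Finset.mem_of_mem_erase hx)).lt_of_ne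
      fun h => Finset.ne_of_mem_erase hx (hf hx₀ (Finset.mem_of_mem_erase hx) h).symm
    refine ⟨x, Finset.mem_of_mem_erase hx, ?_⟩
    rw [← Finset.insert_erase hx₀, Finset.filter_insert, if_pos hx₀x,
      Finset.card_insert_of_notMem (by simp), hcard]

theorem Finset.card_eq_card_filter_lt_add_card_filter_gt (s : Finset α) {f : α → β}
    (hf : InjOn f s) {x : α} (hx : x ∈ s) :
    s.card = (s.filter fun y => f y < f x).card + (s.filter fun y => f x < f y).card + 1 := by
  classical
  have hsplit : (s.filter fun y => ¬ f y < f x) = insert x (s.filter fun y => f x < f y) := by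
    ext y
    simp only [Finset.mem_filter, Finset.mem_insert, not_lt]
    constructor
    · rintro ⟨hy, hle⟩
      rcases hle.lt_or_eq with hlt | heq
      exacts [Or.inr ⟨hy, hlt⟩, Or.inl (hf hy hx heq.symm)]
    · rintro (rfl | ⟨hy, hlt⟩)
      exacts [⟨hx, le_rfl⟩, ⟨hy, hlt.le⟩]
  rw [← Finset.card_filter_add_card_filter_not (fun y => f y < f x), hsplit,
    Finset.card_insert_of_notMem (by simp), add_assoc]

end Generic

def offset (α β : ℝ) (p : Pt) : ℝ := p.2 - (α * p.1 + β)

@[fun_prop]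
theorem continuous_offset (α β : ℝ) : Continuous (offset α β) := by
  unfold offset; fun_prop

theorem convex_setOf_pos_mul_offset (α β σ : ℝ) : Convex ℝ {p : Pt | 0 < σ * offset α β p} := by
  have hlin : IsLinearMap ℝ fun p : Pt => σ * (p.2 - α * p.1) :=
    ⟨fun p q => by simp only [Prod.fst_add, Prod.snd_add]; ring,
      fun c p => by simp only [Prod.smul_fst, Prod.smul_snd, smul_eq_mul]; ring⟩
  have hset : {p : Pt | 0 < σ * offset α β p} = {p | σ * β < σ * (p.2 - α * p.1)} := by
    ext p
    simp only [offset, mem_ofPred_eq]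
    constructor <;> intro h <;> linarith
  exact hset ▸ convex_halfSpace_gt hlin (σ * β)

theorem collinear_of_forall_offset_eq_zero {s : Set Pt} {α β : ℝ}
    (h : ∀ p ∈ s, offset α β p = 0) : Collinear ℝ s := by
  rw [collinear_iff_exists_forall_eq_smul_vadd]
  refine ⟨(0, β), (1, α), fun p hp => ⟨p.1, ?_⟩⟩
  have := h p hp
  unfold offset at this
  ext <;> simp only [vadd_eq_add, Prod.smul_mk, smul_eq_mul, Prod.mk_add_mk] <;> linarith

theorem not_collinear_of_interior_convexHull_nonempty {s : Set Pt}
    (h : (interior (convexHull ℝ s)).Nonempty) : ¬ Collinear ℝ s := by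
  intro hcol
  have htop : vectorSpan ℝ s = ⊤ := by
    rw [← direction_affineSpan, affineSpan_eq_top_of_nonempty_interior h,
      AffineSubspace.direction_top]
  have := (collinear_iff_finrank_le_one).1 hcol
  rw [htop, finrank_top, Module.finrank_prod, Module.finrank_self] at this
  norm_num at this

theorem GenPos.mono {P Q : Finset Pt} (h : GenPos Q) (hPQ : P ⊆ Q) : GenPos P :=
  fun p hp q hq r hr => h p (hPQ hp) q (hPQ hq) r (hPQ hr)

theorem GenPos.image (e : Pt ≃ₗ[ℝ] Pt) {P : Finset Pt} (h : GenPos P) : GenPos (P.image e) := by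
  classical
  simp only [GenPos, Finset.mem_image]
  rintro _ ⟨p, hp, rfl⟩ _ ⟨q, hq, rfl⟩ _ ⟨r, hr, rfl⟩ hpq hpr hqr hcol
  refine h p hp q hq r hr (ne_of_apply_ne e hpq) (ne_of_apply_ne e hpr) (ne_of_apply_ne e hqr) ?_
  rwa [← e.collinear_image_iff, image_insert_eq, image_pair]

structure IsTriangleCover (T : Finset (Finset Pt)) (B K : Set Pt) : Prop where
  isTriangle : ∀ s ∈ T, s.card = 3 ∧ ¬ Collinear ℝ (s : Set Pt)
  disjoint : ∀ s ∈ T, ∀ s' ∈ T, s ≠ s' →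
    Disjoint (interior (convexHull ℝ (s : Set Pt))) (interior (convexHull ℝ (s' : Set Pt)))
  covers : ∀ p ∈ B, ∃ s ∈ T, p ∈ interior (convexHull ℝ (s : Set Pt))
  subset : ∀ s ∈ T, convexHull ℝ (s : Set Pt) ⊆ K

namespace IsTriangleCover

variable {T T₁ T₂ : Finset (Finset Pt)} {B B₁ B₂ K K₁ K₂ : Set Pt}

theorem empty : IsTriangleCover ∅ ∅ K :=
  ⟨by simp, by simp, by simp, by simp⟩

theorem singleton {s : Finset Pt} (hs : s.card = 3) (hcol : ¬ Collinear ℝ (s : Set Pt))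
    (hB : B ⊆ interior (convexHull ℝ (s : Set Pt))) (hK : convexHull ℝ (s : Set Pt) ⊆ K) :
    IsTriangleCover {s} B K where
  isTriangle := by simpa using ⟨hs, hcol⟩
  disjoint := by simp
  covers p hp := ⟨s, Finset.mem_singleton_self s, hB hp⟩
  subset := by simpa using hK

theorem mono (h : IsTriangleCover T B K) {B' K' : Set Pt} (hB : B' ⊆ B) (hK : K ⊆ K') :
    IsTriangleCover T B' K' where
  isTriangle := h.isTriangle
  disjoint := h.disjoint
  covers p hp := h.covers p (hB hp)
  subset s hs := (h.subset s hs).trans hK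

theorem union [DecidableEq Pt] (h₁ : IsTriangleCover T₁ B₁ K₁) (h₂ : IsTriangleCover T₂ B₂ K₂)
    (hK : Disjoint K₁ K₂) : IsTriangleCover (T₁ ∪ T₂) (B₁ ∪ B₂) (K₁ ∪ K₂) where
  isTriangle s hs := (Finset.mem_union.1 hs).elim (h₁.isTriangle s) (h₂.isTriangle s)
  disjoint s hs s' hs' hne := by
    have cross : ∀ t ∈ T₁, ∀ t' ∈ T₂, Disjoint (interior (convexHull ℝ (t : Set Pt)))
        (interior (convexHull ℝ (t' : Set Pt))) := fun t ht t' ht' =>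
      hK.mono (interior_subset.trans (h₁.subset t ht)) (interior_subset.trans (h₂.subset t' ht'))
    rcases Finset.mem_union.1 hs with hs | hs <;> rcases Finset.mem_union.1 hs' with hs' | hs'
    · exact h₁.disjoint s hs s' hs' hne
    · exact cross s hs s' hs'
    · exact (cross s' hs' s hs).symm
    · exact h₂.disjoint s hs s' hs' hne
  covers p hp := by
    rcases hp with hp | hp
    · obtain ⟨s, hs, hps⟩ := h₁.covers p hp
      exact ⟨s, Finset.mem_union_left _ hs, hps⟩
    · obtain ⟨s, hs, hps⟩ := h₂.covers p hp
      exact ⟨s, Finset.mem_union_right _ hs, hps⟩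
  subset s hs := (Finset.mem_union.1 hs).elim
    (fun hs => (h₁.subset s hs).trans subset_union_left)
    (fun hs => (h₂.subset s hs).trans subset_union_right)

theorem map [DecidableEq Pt] (h : IsTriangleCover T B K) (e : Pt ≃ₗ[ℝ] Pt) :
    IsTriangleCover (T.image (Finset.image e)) (e '' B) (e '' K) where
  isTriangle := by
    simp only [Finset.mem_image, forall_exists_index, and_imp, forall_apply_eq_imp_iff₂]
    intro s hs
    rw [Finset.card_image_of_injective s e.injective, Finset.coe_image, e.collinear_image_iff]
    exact h.isTriangle s hs
  disjoint := by
    simp only [Finset.mem_image, forall_exists_index, and_imp, forall_apply_eq_imp_iff₂]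
    intro s hs s' hs' hne
    rw [Finset.coe_image, Finset.coe_image, ← e.image_interior_convexHull,
      ← e.image_interior_convexHull]
    exact (disjoint_image_iff e.injective).2 (h.disjoint s hs s' hs' (fun h => hne (h ▸ rfl)))
  covers := by
    rintro _ ⟨p, hp, rfl⟩
    obtain ⟨s, hs, hps⟩ := h.covers p hp
    refine ⟨s.image e, Finset.mem_image_of_mem _ hs, ?_⟩
    rw [Finset.coe_image, ← e.image_interior_convexHull]
    exact mem_image_of_mem e hps
  subset := by
    simp only [Finset.mem_image, forall_exists_index, and_imp, forall_apply_eq_imp_iff₂]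
    intro s hs
    rw [Finset.coe_image, ← e.image_convexHull]
    exact image_mono (h.subset s hs)

end IsTriangleCover

noncomputable def slabTriangle (a b α β σ ε M : ℝ) : Finset Pt :=
  {(a, α * a + β + σ * ε), (b, α * b + β + σ * ε), ((a + b) / 2, α * ((a + b) / 2) + β + σ * M)}

section SlabTriangle

variable {a b α β σ ε : ℝ}

theorem card_slabTriangle (hab : a < b) (M : ℝ) : (slabTriangle a b α β σ ε M).card = 3 :=
  Finset.card_eq_three.2 ⟨_, _, _, ne_of_apply_ne Prod.fst hab.ne,
    ne_of_apply_ne Prod.fst (show a ≠ (a + b) / 2 by linarith),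
    ne_of_apply_ne Prod.fst (show b ≠ (a + b) / 2 by linarith), rfl⟩

theorem convexHull_slabTriangle_subset (hab : a ≤ b) (hσ : σ * σ = 1) (hε : 0 < ε) {M : ℝ}
    (hM : 0 < M) : convexHull ℝ ↑(slabTriangle a b α β σ ε M) ⊆
      {p : Pt | p.1 ∈ Icc a b ∧ 0 < σ * offset α β p} := by
  refine convexHull_min ?_ (((convex_Icc a b).linear_preimage (LinearMap.fst ℝ ℝ ℝ)).inter
    (convex_setOf_pos_mul_offset α β σ))
  simp only [slabTriangle, Finset.coe_insert, Finset.coe_singleton, insert_subset_iff,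
    singleton_subset_iff, mem_ofPred_eq, offset, mem_Icc, add_sub_cancel_left, ← mul_assoc, hσ,
    one_mul]
  exact ⟨⟨⟨le_rfl, hab⟩, hε⟩, ⟨⟨hab, le_rfl⟩, hε⟩, ⟨⟨by linarith, by linarith⟩, hM⟩⟩

-- The apex height is chosen so that every point at offset below `H` and at horizontal distance
-- more than `ε` from the sides of the slab has positive barycentric coordinates.
theorem subset_interior_convexHull_slabTriangle (hab : a < b) (hσ : σ * σ = 1) (hε : 0 < ε)
    {H : ℝ} (hH : 0 < H) :
    {z : Pt | ε < z.1 - a ∧ ε < b - z.1 ∧ ε < σ * offset α β z ∧ σ * offset α β z < H} ⊆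
      interior (convexHull ℝ ↑(slabTriangle a b α β σ ε (ε + H * (b - a) / ε))) := by
  set w : Pt → ℝ := fun p => (σ * offset α β p - ε) * ε / (H * (b - a))
  set u : Pt → ℝ := fun p => (b - p.1) / (b - a) - w p / 2
  set v : Pt → ℝ := fun p => (p.1 - a) / (b - a) - w p / 2
  have hba : b - a ≠ 0 := sub_ne_zero.2 hab.ne'
  have hsum : ∀ p, u p + v p + w p = 1 := fun p => by
    simp only [u, v]; field_simp; ring
  have hcomb : ∀ p, u p • (a, α * a + β + σ * ε) + v p • (b, α * b + β + σ * ε) +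
      w p • ((a + b) / 2, α * ((a + b) / 2) + β + σ * (ε + H * (b - a) / ε)) = p := by
    intro p
    have hε0 : ε ≠ 0 := hε.ne'
    have hH0 : H ≠ 0 := hH.ne'
    rcases mul_self_eq_one_iff.1 hσ with rfl | rfl <;>
    · refine Prod.ext ?_ ?_ <;>
      · simp only [u, v, w, offset, Prod.fst_add, Prod.snd_add, Prod.smul_fst, Prod.smul_snd,
          smul_eq_mul]
        field_simp
        ring
  have hw : Continuous w := by fun_prop
  rintro z ⟨hεa, hεb, hεL, hLH⟩
  rw [slabTriangle, Finset.coe_insert, Finset.coe_pair]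
  refine subset_interior_convexHull_triple (by fun_prop) (by fun_prop) hw hsum hcomb ?_
  have hwpos : 0 < w z := div_pos (mul_pos (by linarith) hε) (mul_pos hH (by linarith))
  have hwlt : w z * (b - a) < ε := by
    calc w z * (b - a) = (σ * offset α β z - ε) / H * ε := by simp only [w]; field_simp
      _ < 1 * ε := by gcongr; rw [div_lt_one hH]; linarith
      _ = ε := one_mul ε
  have hhalf : w z / 2 * (b - a) < ε := by nlinarith
  refine ⟨?_, ?_, hwpos⟩
  · simp only [u, sub_pos, lt_div_iff₀ (sub_pos.2 hab)]; linarith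
  · simp only [v, sub_pos, lt_div_iff₀ (sub_pos.2 hab)]; linarith

end SlabTriangle

theorem exists_triangle_of_slab_side {S : Finset Pt} (hne : S.Nonempty) {a b α β σ : ℝ}
    (hσ : σ * σ = 1) (hS : ∀ z ∈ S, z.1 ∈ Ioo a b ∧ 0 < σ * offset α β z) :
    ∃ s : Finset Pt, IsTriangleCover {s} S {p | p.1 ∈ Icc a b ∧ 0 < σ * offset α β p} := by
  obtain ⟨z, hz⟩ := hne
  have hab : a < b := (hS z hz).1.1.trans (hS z hz).1.2
  obtain ⟨ε, hε, hεS⟩ := Finset.exists_pos_forall_lt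
    (f := fun z => min (σ * offset α β z) (min (z.1 - a) (b - z.1)))
    fun z hz => lt_min (hS z hz).2 (lt_min (by linarith [(hS z hz).1.1])
      (by linarith [(hS z hz).1.2]))
  obtain ⟨H, hH, hHS⟩ := S.exists_forall_gt (fun z => σ * offset α β z)
  have hinterior : (S : Set Pt) ⊆ interior (convexHull ℝ ↑(slabTriangle a b α β σ ε
      (ε + H * (b - a) / ε))) := fun z (hz : z ∈ S) => by
    obtain ⟨hεL, hεa, hεb⟩ := by simpa only [lt_min_iff] using hεS z hz
    exact subset_interior_convexHull_slabTriangle hab hσ hε hH ⟨hεa, hεb, hεL, hHS z hz⟩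
  exact ⟨_, .singleton (card_slabTriangle hab _)
    (not_collinear_of_interior_convexHull_nonempty ⟨z, hinterior hz⟩) hinterior
    (convexHull_slabTriangle_subset hab.le hσ hε
      (add_pos hε (div_pos (mul_pos hH (sub_pos.2 hab)) hε)))⟩

theorem exists_cover_slab_side (S : Finset Pt) {a b α β σ : ℝ} (hσ : σ * σ = 1)
    (hS : ∀ z ∈ S, z.1 ∈ Ioo a b ∧ 0 < σ * offset α β z) :
    ∃ T : Finset (Finset Pt), T.card ≤ 1 ∧
      IsTriangleCover T S {p | p.1 ∈ Icc a b ∧ 0 < σ * offset α β p} := by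
  rcases S.eq_empty_or_nonempty with rfl | hne
  · exact ⟨∅, by simp, by simpa using IsTriangleCover.empty⟩
  · obtain ⟨s, hs⟩ := exists_triangle_of_slab_side hne hσ hS
    exact ⟨{s}, by simp, hs⟩

theorem exists_cover_slab_off_line (S : Finset Pt) {a b α β : ℝ}
    (hS : ∀ z ∈ S, z.1 ∈ Ioo a b ∧ offset α β z ≠ 0) :
    ∃ T : Finset (Finset Pt), T.card ≤ 2 ∧
      IsTriangleCover T S {p | p.1 ∈ Icc a b ∧ offset α β p ≠ 0} := by
  classical
  obtain ⟨T₁, hT₁, hcov₁⟩ := exists_cover_slab_side (S.filter (0 < offset α β ·))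
    (one_mul 1) fun z hz => by
      rw [Finset.mem_filter] at hz
      exact ⟨(hS z hz.1).1, by rw [one_mul]; exact hz.2⟩
  obtain ⟨T₂, hT₂, hcov₂⟩ := exists_cover_slab_side (S.filter (offset α β · < 0))
    (σ := -1) (by norm_num) fun z hz => by
      rw [Finset.mem_filter] at hz
      exact ⟨(hS z hz.1).1, by rw [neg_one_mul]; exact neg_pos.2 hz.2⟩
  refine ⟨T₁ ∪ T₂, (Finset.card_union_le _ _).trans (by omega),
    (hcov₁.union hcov₂ ?_).mono ?_ ?_⟩
  · exact disjoint_left.2 fun p h₁ h₂ => by linarith [h₁.2, h₂.2]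
  · intro z hz
    rcases (hS z hz).2.lt_or_gt with h | h
    · exact Or.inr (Finset.mem_filter.2 ⟨hz, h⟩)
    · exact Or.inl (Finset.mem_filter.2 ⟨hz, h⟩)
  · rintro p (⟨hp, h⟩ | ⟨hp, h⟩)
    · exact ⟨hp, by linarith⟩
    · exact ⟨hp, by linarith⟩

structure InSweepPosition (B R : Finset Pt) : Prop where
  disjoint : Disjoint B R
  injOn_fst : InjOn Prod.fst (↑(B ∪ R) : Set Pt)
  genPos : GenPos (B ∪ R)

section Sweep

variable {B R : Finset Pt}

theorem InSweepPosition.mono (h : InSweepPosition B R) {B' R' : Finset Pt} (hB : B' ⊆ B)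
    (hR : R' ⊆ R) : InSweepPosition B' R' where
  disjoint := h.disjoint.mono hB hR
  injOn_fst := h.injOn_fst.mono (Finset.coe_subset.2 (Finset.union_subset_union hB hR))
  genPos := h.genPos.mono (Finset.union_subset_union hB hR)

theorem exists_offset_eq_zero_of_card_le_two (h : InSweepPosition B R) (hR : R.card ≤ 2) :
    ∃ α β : ℝ, (∀ r ∈ R, offset α β r = 0) ∧ ∀ z ∈ B, offset α β z ≠ 0 := by
  obtain ⟨hBR, hinj, hgp⟩ := h
  have hxne : ∀ z ∈ B, ∀ r ∈ R, z.1 ≠ r.1 := fun z hz r hr =>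
    hinj.ne (Finset.mem_union_left R hz) (Finset.mem_union_right B hr)
      fun h => Finset.disjoint_left.1 hBR hz (h ▸ hr)
  interval_cases h : R.card
  · obtain ⟨β, hβ⟩ := B.exists_forall_lt Prod.snd
    refine ⟨0, β, by simp [Finset.card_eq_zero.1 h], fun z hz => ?_⟩
    have := hβ z hz
    unfold offset; linarith
  · obtain ⟨p, rfl⟩ := Finset.card_eq_one.1 h
    -- a slope through `p` avoiding the finitely many slopes from `p` to blue points
    obtain ⟨α, hα⟩ := Infinite.exists_notMem_finset (B.image fun z => (z.2 - p.2) / (z.1 - p.1))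
    refine ⟨α, p.2 - α * p.1, by simp [offset], fun z hz hzα => hα ?_⟩
    have hzp : z.1 - p.1 ≠ 0 := sub_ne_zero.2 (hxne z hz p (Finset.mem_singleton_self p))
    refine Finset.mem_image.2 ⟨z, hz, ?_⟩
    unfold offset at hzα
    field_simp
    linarith
  · obtain ⟨p, q, hpq, rfl⟩ := Finset.card_eq_two.1 h
    have hqp : q.1 - p.1 ≠ 0 := sub_ne_zero.2 fun h =>
      hpq (hinj (by simp) (by simp) h.symm)
    set α := (q.2 - p.2) / (q.1 - p.1)
    have hline : ∀ r ∈ ({p, q} : Finset Pt), offset α (p.2 - α * p.1) r = 0 := by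
      simp only [Finset.mem_insert, Finset.mem_singleton, forall_eq_or_imp, forall_eq, offset, α]
      constructor <;> field_simp <;> ring
    refine ⟨α, p.2 - α * p.1, hline, fun z hz hz0 => ?_⟩
    have hzp : z ≠ p := fun h => Finset.disjoint_left.1 hBR hz (by simp [h])
    have hzq : z ≠ q := fun h => Finset.disjoint_left.1 hBR hz (by simp [h])
    refine hgp p (by simp) q (by simp) z (by simp [hz]) hpq hzp.symm hzq.symm
      (collinear_of_forall_offset_eq_zero (α := α) (β := p.2 - α * p.1) ?_)
    simp only [mem_insert_iff, mem_singleton_iff, forall_eq_or_imp, forall_eq]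
    exact ⟨hline p (by simp), hline q (by simp), hz0⟩

theorem exists_cover_slab_of_card_le_two (h : InSweepPosition B R) (hR : R.card ≤ 2)
    {a b : ℝ} (hB : ∀ z ∈ B, z.1 ∈ Ioo a b) :
    ∃ T : Finset (Finset Pt), T.card ≤ 2 ∧ IsTriangleCover T B ({p | p.1 ∈ Icc a b} \ R) := by
  obtain ⟨α, β, hR0, hB0⟩ := exists_offset_eq_zero_of_card_le_two h hR
  obtain ⟨T, hT, hcov⟩ := exists_cover_slab_off_line B fun z hz => ⟨hB z hz, hB0 z hz⟩
  exact ⟨T, hT, hcov.mono subset_rfl fun p hp => ⟨hp.1, fun hpR => hp.2 (hR0 p hpR)⟩⟩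

theorem exists_cover_of_card_le_two (h : InSweepPosition B R) (hR : R.card ≤ 2)
    {ℓ : ℝ} (hℓ : ∀ z ∈ B, ℓ < z.1) :
    ∃ T : Finset (Finset Pt), 3 * T.card ≤ 2 * R.card + 5 ∧
      IsTriangleCover T B ({p | ℓ ≤ p.1} \ R) := by
  obtain ⟨b, -, hb⟩ := B.exists_forall_gt Prod.fst
  have hB : ∀ z ∈ B, z.1 ∈ Ioo ℓ b := fun z hz => ⟨hℓ z hz, hb z hz⟩
  rcases R.eq_empty_or_nonempty with rfl | hne
  · obtain ⟨β, hβ⟩ := B.exists_forall_lt Prod.snd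
    obtain ⟨T, hT, hcov⟩ := exists_cover_slab_side B (α := 0) (β := β) (one_mul 1)
      fun z hz => ⟨hB z hz, by simp only [offset, one_mul, zero_mul, zero_add, sub_pos, hβ z hz]⟩
    exact ⟨T, by simp; omega, hcov.mono subset_rfl fun p hp => ⟨hp.1.1, by simp⟩⟩
  · obtain ⟨T, hT, hcov⟩ := exists_cover_slab_of_card_le_two h hR hB
    have := hne.card_pos
    exact ⟨T, by omega, hcov.mono subset_rfl fun p hp => ⟨hp.1.1, hp.2⟩⟩

theorem exists_cover_of_inSweepPosition (h : InSweepPosition B R) {ℓ : ℝ}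
    (hℓ : ∀ p ∈ B ∪ R, ℓ < p.1) :
    ∃ T : Finset (Finset Pt), 3 * T.card ≤ 2 * R.card + 5 ∧
      IsTriangleCover T B ({p | ℓ ≤ p.1} \ R) := by
  classical
  induction hn : R.card using Nat.strong_induction_on generalizing B R ℓ with
  | _ n ih =>
  rcases lt_or_ge n 3 with hn3 | hn3
  · exact hn ▸ exists_cover_of_card_le_two h (by omega)
      fun z hz => hℓ z (Finset.mem_union_left R hz)
  have hinjR : InjOn Prod.fst (R : Set Pt) := h.injOn_fst.mono (by simp)
  -- `q` is the third red point from the left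
  obtain ⟨q, hqR, hq⟩ := R.exists_card_filter_lt_eq hinjR (k := 2) (by omega)
  have hqBR : q ∈ B ∪ R := Finset.mem_union_right B hqR
  obtain ⟨δ, hδ, hfar⟩ := (B ∪ R).exists_pos_gap Prod.fst q.1
  obtain ⟨T₁, hT₁, hcov₁⟩ := exists_cover_slab_of_card_le_two (a := ℓ) (b := q.1 - δ)
    (h.mono (Finset.filter_subset (·.1 < q.1) B) (Finset.filter_subset (·.1 < q.1) R)) hq.le
    fun z hz => by
      obtain ⟨hzB, hzq⟩ := Finset.mem_filter.1 hz
      exact ⟨hℓ z (Finset.mem_union_left R hzB), (hfar z (Finset.mem_union_left R hzB)).1 hzq⟩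
  have hsplit := R.card_eq_card_filter_lt_add_card_filter_gt hinjR hqR
  obtain ⟨T₂, hT₂, hcov₂⟩ := ih _ (by omega)
    (h.mono (Finset.filter_subset (q.1 < ·.1) B) (Finset.filter_subset (q.1 < ·.1) R))
    (ℓ := q.1 + δ) (fun p hp => by
      rcases Finset.mem_union.1 hp with hp | hp <;> obtain ⟨hp, hpq⟩ := Finset.mem_filter.1 hp
      exacts [(hfar p (Finset.mem_union_left R hp)).2 hpq,
        (hfar p (Finset.mem_union_right B hp)).2 hpq])
    rfl
  refine ⟨T₁ ∪ T₂, by have := Finset.card_union_le T₁ T₂; omega,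
    (hcov₁.union hcov₂ ?_).mono ?_ ?_⟩
  · refine disjoint_left.2 fun p h₁ h₂ => ?_
    have h₁ : p.1 ≤ q.1 - δ := h₁.1.2
    have h₂ : q.1 + δ ≤ p.1 := h₂.1
    linarith
  · intro z hz
    have hzq : z ≠ q := fun h' => Finset.disjoint_left.1 h.disjoint hz (h' ▸ hqR)
    rcases lt_or_gt_of_ne (h.injOn_fst.ne (Finset.mem_union_left R hz) hqBR hzq) with hlt | hgt
    · exact Or.inl (Finset.mem_filter.2 ⟨hz, hlt⟩)
    · exact Or.inr (Finset.mem_filter.2 ⟨hz, hgt⟩)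
  · rintro p (⟨⟨hℓp, hpq⟩, hpR⟩ | ⟨hqp, hpR⟩)
    · exact ⟨hℓp, fun hR => hpR (Finset.mem_filter.2 ⟨hR, by linarith⟩)⟩
    · have hqp : q.1 + δ ≤ p.1 := hqp
      exact ⟨show ℓ ≤ p.1 by linarith [hℓ q hqBR],
        fun hR => hpR (Finset.mem_filter.2 ⟨hR, by linarith⟩)⟩

end Sweep

def shear (c : ℝ) : Pt ≃ₗ[ℝ] Pt where
  toFun p := (p.1 + c * p.2, p.2)
  invFun p := (p.1 - c * p.2, p.2)
  map_add' p q := by ext <;> simp only [Prod.fst_add, Prod.snd_add]; ring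
  map_smul' r p := by
    ext <;> simp only [Prod.smul_fst, Prod.smul_snd, smul_eq_mul, RingHom.id_apply]; ring
  left_inv p := by simp
  right_inv p := by simp

theorem exists_injOn_fst_shear (S : Finset Pt) : ∃ c, InjOn (Prod.fst ∘ shear c) S := by
  -- avoid the finitely many `c` for which two points of `S` get the same first coordinate
  obtain ⟨c, hc⟩ := Infinite.exists_notMem_finset
    ((S ×ˢ S).image fun pq : Pt × Pt => (pq.2.1 - pq.1.1) / (pq.1.2 - pq.2.2))
  refine ⟨c, fun p hp q hq hpq => ?_⟩
  change p.1 + c * p.2 = q.1 + c * q.2 at hpq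
  by_contra hne
  by_cases hy : p.2 = q.2
  · exact hne (Prod.ext (by rw [hy] at hpq; linarith) hy)
  · have : p.2 - q.2 ≠ 0 := sub_ne_zero.2 hy
    refine hc (Finset.mem_image.2 ⟨(p, q), Finset.mem_product.2 ⟨hp, hq⟩, ?_⟩)
    field_simp
    linarith

/-- Given `b` blue and `r` red points in general position, there are at most `(2/3)r + 5/3`
closed triangles with pairwise disjoint interiors such that every blue point lies in the
interior of some triangle and no triangle contains a red point. -/
theorem stmt5 (B R : Finset Pt) (hdisj : Disjoint B R) (hgp : GenPos (B ∪ R)) :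
    ∃ T : Finset (Finset Pt),
      (T.card : ℚ) ≤ 2 / 3 * R.card + 5 / 3 ∧
      (∀ s ∈ T, s.card = 3 ∧ ¬ Collinear ℝ (↑s : Set Pt)) ∧
      (∀ s ∈ T, ∀ s' ∈ T, s ≠ s' →
        Disjoint (interior (convexHull ℝ (↑s : Set Pt)))
                 (interior (convexHull ℝ (↑s' : Set Pt)))) ∧
      (∀ p ∈ B, ∃ s ∈ T, p ∈ interior (convexHull ℝ (↑s : Set Pt))) ∧
      (∀ s ∈ T, ∀ r ∈ R, r ∉ convexHull ℝ (↑s : Set Pt)) := by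
  classical
  obtain ⟨c, hc⟩ := exists_injOn_fst_shear (B ∪ R)
  set e := shear c
  have hpos : InSweepPosition (B.image e) (R.image e) :=
    ⟨(Finset.disjoint_image e.injective).2 hdisj,
      by rw [← Finset.image_union, Finset.coe_image]; exact hc.image_of_comp,
      by rw [← Finset.image_union]; exact hgp.image e⟩
  obtain ⟨ℓ, hℓ⟩ := (B.image e ∪ R.image e).exists_forall_lt Prod.fst
  obtain ⟨T, hcard, hT⟩ := exists_cover_of_inSweepPosition hpos hℓ
  have hT' := hT.map e.symm
  refine ⟨T.image (Finset.image e.symm), ?_, hT'.isTriangle, hT'.disjoint,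
    fun p hp => hT'.covers p ⟨e p, by simp [hp]⟩, fun s hs r hr hrs => ?_⟩
  · rw [Finset.card_image_of_injective R e.injective] at hcard
    have hcardℚ : (3 * T.card : ℚ) ≤ 2 * R.card + 5 := by exact_mod_cast hcard
    have himage : ((T.image (Finset.image e.symm)).card : ℚ) ≤ T.card := by
      exact_mod_cast Finset.card_image_le
    linarith
  · obtain ⟨y, ⟨-, hyR⟩, rfl⟩ := hT'.subset s hs hrs
    exact hyR (Finset.mem_image.2 ⟨e.symm y, hr, e.apply_symm_apply y⟩)
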